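/- For every finite set R ∈ 𝒲 and every x ∈ V_{2,g} with ℙ[R̃_norm = R and ι = x] > 0: (i) Ū₀(g,gR|1) = ℙ_g[S_{gR} = ∞ and X_n ∈ C(g) for all n ≥ 1]; (ii) Ū₁(gx,gR|1) = ℙ_{gx}[S_{gR} = ∞ and X_n ∉ C(gx) for all n ≥ 1]. -/

import Mathlib

open MeasureTheory Filter ProbabilityTheory
open scoped ENNReal NNReal

noncomputable section

namespace CapFP

/-- A letter of the free product `V₁ ∗ V₂`: an element of `V₁∖{o₁}` or of `V₂∖{o₂}`. -/
abbrev Letter (α β : Type) (o₁ : α) (o₂ : β) : Type :=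
  {a : α // a ≠ o₁} ⊕ {b : β // b ≠ o₂}

/-- The index (1 or 2) of the free factor a letter belongs to. -/
def Letter.side {α β : Type} {o₁ : α} {o₂ : β} (l : Letter α β o₁ o₂) : ℕ :=
  Sum.elim (fun _ => 1) (fun _ => 2) l

/-- No two consecutive letters come from the same free factor. -/
def Alternating {α β : Type} {o₁ : α} {o₂ : β} (w : List (Letter α β o₁ o₂)) : Prop :=
  w.Chain' fun x y => Letter.side x ≠ Letter.side y

/-- The free product `V = V₁ ∗ V₂`, realized as the set of alternating words
over the alphabet `(V₁∖{o₁}) ∪ (V₂∖{o₂})`. -/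
abbrev Word (α β : Type) (o₁ : α) (o₂ : β) : Type :=
  {w : List (Letter α β o₁ o₂) // Alternating w}

variable {α β : Type} {o₁ : α} {o₂ : β}

instance : MeasurableSpace (Word α β o₁ o₂) := ⊤

/-- The empty word `o`. -/
def emptyWord : Word α β o₁ o₂ := ⟨[], List.isChain_nil⟩

/-- Word length `‖u‖`. -/
def wlen (u : Word α β o₁ o₂) : ℕ := u.val.length

/-- The type `t(u)` of a word: the side of its last letter, `0` for the empty word. -/
def wtype (u : Word α β o₁ o₂) : ℕ := u.val.getLast?.elim 0 Letter.side

/-- The side of the first letter of a word, `0` for the empty word. -/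
def wfirst (u : Word α β o₁ o₂) : ℕ := u.val.head?.elim 0 Letter.side

/-- The cone `C(x) = {y : x is a prefix of y}`. -/
def cone (x : Word α β o₁ o₂) : Set (Word α β o₁ o₂) := {y | x.val <+: y.val}

/-- The one–letter word. -/
def letterWord (l : Letter α β o₁ o₂) : Word α β o₁ o₂ := ⟨[l], List.isChain_singleton l⟩

/-- Embedding of `V₁` into (lists of letters of) the free product: `o₁` ↦ empty word. -/
def incl1 (o₁ : α) (o₂ : β) [DecidableEq α] (v : α) : List (Letter α β o₁ o₂) :=
  if h : v = o₁ then [] else [Sum.inl ⟨v, h⟩]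

/-- Embedding of `V₂` into (lists of letters of) the free product: `o₂` ↦ empty word. -/
def incl2 (o₁ : α) (o₂ : β) [DecidableEq β] (v : β) : List (Letter α β o₁ o₂) :=
  if h : v = o₂ then [] else [Sum.inr ⟨v, h⟩]

attribute [local instance] Classical.propDecidable

/-- The lift `P̄₁` of `P₁` to the free product: `p̄₁(xv, xw) = p₁(v,w)` for `t(x) ≠ 1`,
`v, w ∈ V₁`, and `0` otherwise. -/
def pbar1 (o₁ : α) (o₂ : β) [DecidableEq α] (p₁ : α → α → ℝ) (x y : Word α β o₁ o₂) : ℝ :=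
  ∑' (w : Word α β o₁ o₂) (v : α) (v' : α),
    if wtype w ≠ 1 ∧ x.val = w.val ++ incl1 o₁ o₂ v ∧ y.val = w.val ++ incl1 o₁ o₂ v'
    then p₁ v v' else 0

/-- The lift `P̄₂` of `P₂` to the free product. -/
def pbar2 (o₁ : α) (o₂ : β) [DecidableEq β] (p₂ : β → β → ℝ) (x y : Word α β o₁ o₂) : ℝ :=
  ∑' (w : Word α β o₁ o₂) (v : β) (v' : β),
    if wtype w ≠ 2 ∧ x.val = w.val ++ incl2 o₁ o₂ v ∧ y.val = w.val ++ incl2 o₁ o₂ v'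
    then p₂ v v' else 0

/-- `n`-step transition "probabilities" of a kernel `p`. -/
def nstep {γ : Type} [DecidableEq γ] (p : γ → γ → ℝ) : ℕ → γ → γ → ℝ
  | 0, x, y => if x = y then 1 else 0
  | n + 1, x, y => ∑' z : γ, nstep p n x z * p z y

/-- The standing setup: a free product of two (at most countable) rooted transition
graphs, with the convex-combination random walk `P = α·P̄₁ + (1-α)·P̄₂` on it, realized
as the family of path measures `μ x` (law of the chain started at `x`). -/
structure Setup (α β : Type) [DecidableEq α] [DecidableEq β] (o₁ : α) (o₂ : β) where
  countable₁ : Countable α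
  countable₂ : Countable β
  /-- `V₁` has at least two elements. -/
  two₁ : ∃ u : α, u ≠ o₁
  /-- `V₂` has at least two elements. -/
  two₂ : ∃ u : β, u ≠ o₂
  /-- Not both factors have exactly two elements. -/
  not_both_two : ¬(Nat.card α = 2 ∧ Nat.card β = 2)
  p₁ : α → α → ℝ
  p₂ : β → β → ℝ
  p₁_nonneg : ∀ x y, 0 ≤ p₁ x y
  p₂_nonneg : ∀ x y, 0 ≤ p₂ x y
  p₁_rowsum : ∀ x, HasSum (p₁ x) 1
  p₂_rowsum : ∀ x, HasSum (p₂ x) 1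
  p₁_noloop : ∀ x, p₁ x x = 0
  p₂_noloop : ∀ x, p₂ x x = 0
  p₁_reach : ∀ x : α, ∃ n : ℕ, 0 < nstep p₁ n o₁ x
  p₂_reach : ∀ x : β, ∃ n : ℕ, 0 < nstep p₂ n o₂ x
  /-- the weight `α ∈ (0,1)` of the convex combination. -/
  a : ℝ
  a_mem : a ∈ Set.Ioo (0 : ℝ) 1
  /-- `μ x` is the law of the random walk `(X_n)` with transition matrix
  `P = a·P̄₁ + (1-a)·P̄₂` started at `x`. -/
  μ : Word α β o₁ o₂ → Measure (ℕ → Word α β o₁ o₂)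
  μ_prob : ∀ x, IsProbabilityMeasure (μ x)
  μ_start : ∀ x, μ x {ω | ω 0 = x} = 1
  μ_cyl : ∀ (x : Word α β o₁ o₂) (n : ℕ) (w : ℕ → Word α β o₁ o₂),
    μ x {ω | ∀ i ≤ n, ω i = w i} =
      ENNReal.ofReal (if w 0 = x then
        ∏ i ∈ Finset.range n,
          (a * pbar1 o₁ o₂ p₁ (w i) (w (i + 1)) + (1 - a) * pbar2 o₁ o₂ p₂ (w i) (w (i + 1)))
        else 0)

variable [DecidableEq α] [DecidableEq β]

/-- The transition matrix `P` on the free product. -/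
def Setup.P (S : Setup α β o₁ o₂) (x y : Word α β o₁ o₂) : ℝ :=
  S.a * pbar1 o₁ o₂ S.p₁ x y + (1 - S.a) * pbar2 o₁ o₂ S.p₂ x y

/-- The spectral radius `ρ = limsup_n ℙ_o[X_n = o]^{1/n}`. -/
def Setup.rho (S : Setup α β o₁ o₂) : ℝ :=
  Filter.limsup
    (fun n : ℕ => (S.μ emptyWord {ω | ω n = emptyWord}).toReal ^ (1 / (n : ℝ))) atTop

/-- The event `S_A = ∞`, i.e. the walk never hits `A` at a time `≥ 1`. -/
def neverHit (A : Set (Word α β o₁ o₂)) : Set (ℕ → Word α β o₁ o₂) :=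
  {ω | ∀ m, 1 ≤ m → ω m ∉ A}

/-- The capacity `Cap(A) = Σ_{x∈A} ℙ_x[S_A = ∞]`. -/
def Setup.Cap (S : Setup α β o₁ o₂) (A : Set (Word α β o₁ o₂)) : ℝ :=
  ∑' x : A, (S.μ ↑x (neverHit A)).toReal

/-- The range `R_n(ω) = {ω 0, …, ω n}`. -/
def rangeSet (ω : ℕ → Word α β o₁ o₂) (n : ℕ) : Set (Word α β o₁ o₂) :=
  {x | ∃ i ≤ n, ω i = x}

/-- The exit times: `e₀ = 0` and
`e_k = inf{m > 0 : ‖ω m‖ = k and ω n ∈ C(ω m) for all n ≥ m}`. -/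
def exitTime (ω : ℕ → Word α β o₁ o₂) : ℕ → ℕ
  | 0 => 0
  | k + 1 => sInf {m | 0 < m ∧ wlen (ω m) = k + 1 ∧ ∀ n ≥ m, ω n ∈ cone (ω m)}

/-- The set `K₀` of words starting with a letter of `V_{t(X_{e₁})}`, together with `o`. -/
def K0 (ω : ℕ → Word α β o₁ o₂) : Set (Word α β o₁ o₂) :=
  {y | y = emptyWord ∨ wfirst y = wtype (ω (exitTime ω 1))}

/-- The interior parts `R_k^{(I)}` of the range between consecutive exit points. -/
def RI (ω : ℕ → Word α β o₁ o₂) : ℕ → Set (Word α β o₁ o₂)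
  | 0 => rangeSet ω (exitTime ω 1) ∩ (K0 ω \ (cone (ω (exitTime ω 1)) ∪ {emptyWord}))
  | k + 1 => rangeSet ω (exitTime ω (k + 2)) ∩
      (cone (ω (exitTime ω (k + 1))) \ (cone (ω (exitTime ω (k + 2))) ∪ {ω (exitTime ω (k + 1))}))

/-- The sets `R_k`. -/
def Rset (ω : ℕ → Word α β o₁ o₂) : ℕ → Set (Word α β o₁ o₂)
  | 0 => RI ω 0 ∪ {emptyWord, ω (exitTime ω 1)}
  | k + 1 => RI ω (k + 1) ∪ {ω (exitTime ω (k + 1)), ω (exitTime ω (k + 2))}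

/-- `C_k^{(I)} = Σ_{x ∈ R_k^{(I)}} ℙ_x[S_{R_k} = ∞]`. -/
def CI (S : Setup α β o₁ o₂) (ω : ℕ → Word α β o₁ o₂) (k : ℕ) : ℝ :=
  ∑' x : RI ω k, (S.μ ↑x (neverHit (Rset ω k))).toReal

/-- The quantities `C_k`. -/
def Cfun (S : Setup α β o₁ o₂) (ω : ℕ → Word α β o₁ o₂) : ℕ → ℝ
  | 0 => CI S ω 0
      + (S.μ emptyWord (neverHit (Rset ω 0) ∩ {ω' | ∀ n, 1 ≤ n → ω' n ∈ K0 ω})).toReal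
      + (S.μ (ω (exitTime ω 1))
          (neverHit (Rset ω 0) ∩ {ω' | ∀ n, 1 ≤ n → ω' n ∉ cone (ω (exitTime ω 1))})).toReal
  | k + 1 => CI S ω (k + 1)
      + (S.μ (ω (exitTime ω (k + 1)))
          (neverHit (Rset ω (k + 1)) ∩ {ω' | ∀ n, 1 ≤ n → ω' n ∈ cone (ω (exitTime ω (k + 1)))})).toReal
      + (S.μ (ω (exitTime ω (k + 2)))
          (neverHit (Rset ω (k + 1)) ∩ {ω' | ∀ n, 1 ≤ n → ω' n ∉ cone (ω (exitTime ω (k + 2)))})).toReal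

/-- The quantity `C₀*`. -/
def C0star (S : Setup α β o₁ o₂) (ω : ℕ → Word α β o₁ o₂) : ℝ :=
  (∑' x : ↥(rangeSet ω (exitTime ω 1) \ K0 ω),
      (S.μ ↑x (neverHit (rangeSet ω (exitTime ω 1)))).toReal)
  + (S.μ emptyWord
      (neverHit (rangeSet ω (exitTime ω 1)) ∩ {ω' | ∀ n, 1 ≤ n → ω' n ∉ K0 ω})).toReal

/-- The quantity `O_k`. -/
def Ofun (S : Setup α β o₁ o₂) (ω : ℕ → Word α β o₁ o₂) (k : ℕ) : ℝ :=
  (∑' x : ↥((rangeSet ω (exitTime ω k) ∩ cone (ω (exitTime ω k))) \ {ω (exitTime ω k)}),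
      (S.μ ↑x (neverHit (rangeSet ω (exitTime ω k)))).toReal)
  + (S.μ (ω (exitTime ω k))
      (neverHit (rangeSet ω (exitTime ω k)) ∩
        {ω' | ∀ n, 1 ≤ n → ω' n ∈ cone (ω (exitTime ω k))})).toReal

/-- First visit time `T_x`. -/
def firstVisit (ω : ℕ → Word α β o₁ o₂) (x : Word α β o₁ o₂) : ℕ :=
  sInf {m | ω m = x}

/-- The regeneration times `τ_k` (w.r.t. the fixed letter `g ∈ V₁∖{o₁}`):
times `m` at which `W_m = g` (the word at the exit time ends with `g`) and the exit
point is visited for the first time at the exit time. -/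
def tau (g : {u : α // u ≠ o₁}) (ω : ℕ → Word α β o₁ o₂) : ℕ → ℕ
  | 0 => sInf {m | 1 ≤ m ∧ (ω (exitTime ω m)).val.getLast? = some (Sum.inl g)
      ∧ exitTime ω m = firstVisit ω (ω (exitTime ω m))}
  | k + 1 => sInf {m | tau g ω k < m ∧ (ω (exitTime ω m)).val.getLast? = some (Sum.inl g)
      ∧ exitTime ω m = firstVisit ω (ω (exitTime ω m))}

/-- `T_k = e_{τ_k}`. -/
def Tk (g : {u : α // u ≠ o₁}) (ω : ℕ → Word α β o₁ o₂) (k : ℕ) : ℕ :=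
  exitTime ω (tau g ω k)

/-- `C̃_i = Σ_{j=τ_{i-1}}^{τ_i - 1} C_j` (meaningful for `i ≥ 1`). -/
def Ctilde (S : Setup α β o₁ o₂) (g : {u : α // u ≠ o₁}) (ω : ℕ → Word α β o₁ o₂) (i : ℕ) : ℝ :=
  ∑ j ∈ Finset.Ico (tau g ω (i - 1)) (tau g ω i), Cfun S ω j

/-- `D_i = C̃_i − c·(T_i − T_{i-1})` (meaningful for `i ≥ 1`). -/
def Dfun (S : Setup α β o₁ o₂) (g : {u : α // u ≠ o₁}) (c : ℝ)
    (ω : ℕ → Word α β o₁ o₂) (i : ℕ) : ℝ :=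
  Ctilde S g ω i - c * ((Tk g ω i : ℝ) - (Tk g ω (i - 1) : ℝ))

/-- `𝔖̃_k = Σ_{i=1}^k C̃_i`. -/
def Stilde (S : Setup α β o₁ o₂) (g : {u : α // u ≠ o₁}) (ω : ℕ → Word α β o₁ o₂) (k : ℕ) : ℝ :=
  ∑ i ∈ Finset.Icc 1 k, Ctilde S g ω i

/-- `t(n) = sup{m : T_m ≤ n}`. -/
def tcount (g : {u : α // u ≠ o₁}) (ω : ℕ → Word α β o₁ o₂) (n : ℕ) : ℕ :=
  sSup {m | Tk g ω m ≤ n}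

/-- The Green function `G(x,y|z) = Σ_n ℙ_x[X_n = y] z^n` (as an extended real). -/
def Ggf (S : Setup α β o₁ o₂) (x y : Word α β o₁ o₂) (z : ℝ) : ℝ≥0∞ :=
  ∑' n : ℕ, S.μ x {ω | ω n = y} * ENNReal.ofReal (z ^ n)

/-- The last-visit generating function
`L(x,y|z) = Σ_n ℙ_x[X_n = y, X_k ≠ x ∀ k < n] z^n` (as an extended real). -/
def Lgf (S : Setup α β o₁ o₂) (x y : Word α β o₁ o₂) (z : ℝ) : ℝ≥0∞ :=
  ∑' n : ℕ, S.μ x {ω | ω n = y ∧ ∀ k < n, ω k ≠ x} * ENNReal.ofReal (z ^ n)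

/-- `U(x,R|z) = Σ_{n≥1} ℙ_x[S_R = n] z^n` (as an extended real). -/
def Ugf (S : Setup α β o₁ o₂) (x : Word α β o₁ o₂) (R : Set (Word α β o₁ o₂)) (z : ℝ) : ℝ≥0∞ :=
  ∑' n : ℕ,
    (if 1 ≤ n then S.μ x {ω | ω n ∈ R ∧ ∀ m, 1 ≤ m → m < n → ω m ∉ R} else 0)
    * ENNReal.ofReal (z ^ n)

/-- The normalized range between regeneration times:
`R̃₁ = R_{T₁} ∩ (C(X_{T₀}) ∖ (C(X_{T₁}) ∖ {X_{T₁}}))`. -/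
def Rtilde1 (g : {u : α // u ≠ o₁}) (ω : ℕ → Word α β o₁ o₂) : Set (Word α β o₁ o₂) :=
  rangeSet ω (Tk g ω 1) ∩
    (cone (ω (Tk g ω 0)) \ (cone (ω (Tk g ω 1)) \ {ω (Tk g ω 1)}))

/-- `R̃_norm = {w : X_{T₀}·w ∈ R̃₁}`. -/
def Rnorm (g : {u : α // u ≠ o₁}) (ω : ℕ → Word α β o₁ o₂) : Set (Word α β o₁ o₂) :=
  {w | ∃ u ∈ Rtilde1 g ω, u.val = (ω (Tk g ω 0)).val ++ w.val}

/-- `V_{2,g}`: words starting with a letter of `V₂∖{o₂}` and ending with `g`,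
with no other occurrence of `g`. -/
def V2g (g : {u : α // u ≠ o₁}) : Set (Word α β o₁ o₂) :=
  {v | wfirst v = 2 ∧ v.val.getLast? = some (Sum.inl g) ∧
    ∀ l ∈ v.val.dropLast, l ≠ Sum.inl g}

/-- `gR = {g·w : w ∈ R}`. -/
def gSet (g : {u : α // u ≠ o₁}) (R : Set (Word α β o₁ o₂)) : Set (Word α β o₁ o₂) :=
  {u | ∃ w ∈ R, u.val = Sum.inl g :: w.val}

/-- `U₀(g, gR | z) = Σ_{n≥1} ℙ_g[S_{gR} = n, X_m ∈ C(g) ∀ m ≤ n] z^n`. -/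
def U0real (S : Setup α β o₁ o₂) (g : {u : α // u ≠ o₁})
    (R : Set (Word α β o₁ o₂)) (z : ℝ) : ℝ :=
  ∑' n : ℕ,
    (if 1 ≤ n then
      (S.μ (letterWord (Sum.inl g))
        {ω | ω n ∈ R ∧ (∀ m, 1 ≤ m → m < n → ω m ∉ R) ∧
          ∀ m ≤ n, ω m ∈ cone (letterWord (Sum.inl g))}).toReal
    else 0) * z ^ n

/-- `U₁(gx, gR | z) = Σ_{n≥1} ℙ_{gx}[S_{gR} = n, X_m ∉ C(gx) ∀ 1 ≤ m ≤ n-1] z^n`. -/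
def U1real (S : Setup α β o₁ o₂) (gx : Word α β o₁ o₂)
    (R : Set (Word α β o₁ o₂)) (z : ℝ) : ℝ :=
  ∑' n : ℕ,
    (if 1 ≤ n then
      (S.μ gx
        {ω | ω n ∈ R ∧ (∀ m, 1 ≤ m → m < n → ω m ∉ R) ∧
          ∀ m, 1 ≤ m → m < n → ω m ∉ cone gx}).toReal
    else 0) * z ^ n

end CapFP

/-! Both identities are first-step decompositions. From a word `y` ending in a letter of `V₁`,
a step of the walk stays in the cone `C(y)` with probability `1 - α` (a `P̄₂`-move appends a
letter) and leaves it with probability `α` (a `P̄₁`-move changes or deletes the last letter,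
since `p₁` has no loops). Every move changes only the last letter, so the walk can leave `C(y)`
only from `y` and can enter it only at `y`.

The positivity hypothesis provides a path along which `o ∈ R`, `x ∈ R` and no other word of
`R` extends `x`. Hence `g ∈ gR`, `gx ∈ gR` and `gR ∩ C(gx) = {gx}`, so up to the hitting time
of `gR` the walk stays inside `C(g)`, resp. outside `C(gx)`. Splitting the first step according
to the value of `S_{gR}` gives `1 - α = U₀(g, gR|1) + ℙ_g[…]` and `α = U₁(gx, gR|1) + ℙ_{gx}[…]`.
-/

-- A new block, so that `[DecidableEq α] [DecidableEq β]` and the classical decidability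
-- instance declared above are not in force below.
namespace CapFP

variable {α β : Type} {o₁ : α} {o₂ : β}

theorem mem_cone_self (y : Word α β o₁ o₂) : y ∈ cone y := List.prefix_refl _

theorem wtype_of_val_eq_append_singleton {y : Word α β o₁ o₂} {w : List (Letter α β o₁ o₂)}
    {l : Letter α β o₁ o₂} (hy : y.val = w ++ [l]) : wtype y = l.side := by
  simp [wtype, hy]

/-- The relation between consecutive positions of the walk (`Setup.adj_of_P_ne_zero`). -/
def Adj (u v : Word α β o₁ o₂) : Prop :=
  u ≠ v ∧ ∃ w, w <+: u.val ∧ w <+: v.val ∧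
    u.val.length ≤ w.length + 1 ∧ v.val.length ≤ w.length + 1

theorem Adj.symm {u v : Word α β o₁ o₂} (h : Adj u v) : Adj v u :=
  let ⟨hne, w, hu, hv, hlu, hlv⟩ := h
  ⟨hne.symm, w, hv, hu, hlv, hlu⟩

theorem Adj.eq_of_mem_cone_of_notMem_cone {u v c : Word α β o₁ o₂} (h : Adj u v)
    (hu : u ∈ cone c) (hv : v ∉ cone c) : u = c := by
  obtain ⟨-, w, hwu, hwv, hlu, -⟩ := h
  have hlen : w.length < c.val.length := by
    by_contra! hle
    exact hv ((List.prefix_of_prefix_length_le hu hwu hle).trans hwv)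
  exact Subtype.ext (hu.eq_of_length (by have := hu.length_le; omega)).symm

section LiftKernel

variable {γ : Type} {i : ℕ} {ι : γ → List (Letter α β o₁ o₂)} {p : γ → γ → ℝ}

open Classical in
/-- The common form of `pbar1` and `pbar2` (`pbar1_eq_liftKernel`, `pbar2_eq_liftKernel`). -/
def liftKernel (i : ℕ) (ι : γ → List (Letter α β o₁ o₂)) (p : γ → γ → ℝ)
    (x y : Word α β o₁ o₂) : ℝ :=
  ∑' (w : Word α β o₁ o₂) (v : γ) (v' : γ),
    if wtype w ≠ i ∧ x.val = w.val ++ ι v ∧ y.val = w.val ++ ι v' then p v v' else 0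

theorem liftKernel_nonneg (hp : ∀ a b, 0 ≤ p a b) (x y : Word α β o₁ o₂) :
    0 ≤ liftKernel i ι p x y :=
  tsum_nonneg fun _ => tsum_nonneg fun _ => tsum_nonneg fun _ => by
    split_ifs
    exacts [hp _ _, le_rfl]

theorem exists_of_liftKernel_ne_zero {x y : Word α β o₁ o₂} (h : liftKernel i ι p x y ≠ 0) :
    ∃ w a b, wtype w ≠ i ∧ x.val = w.val ++ ι a ∧ y.val = w.val ++ ι b ∧ p a b ≠ 0 := by
  by_contra! hzero
  refine h ((tsum_congr fun w => (tsum_congr fun a => (tsum_congr fun b => ?_).trans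
    tsum_zero).trans tsum_zero).trans tsum_zero)
  split_ifs with hc
  exacts [hzero w a b hc.1 hc.2.1 hc.2.2, rfl]

end LiftKernel

section FactorIncl

variable {γ : Type} [DecidableEq γ] {o : γ} {ℓ : {v : γ // v ≠ o} → Letter α β o₁ o₂}
  {i : ℕ} {p : γ → γ → ℝ}

/-- The common form of `incl1` and `incl2`. -/
def factorIncl (o : γ) (ℓ : {v : γ // v ≠ o} → Letter α β o₁ o₂) (v : γ) :
    List (Letter α β o₁ o₂) :=
  if h : v = o then [] else [ℓ ⟨v, h⟩]

theorem factorIncl_self : factorIncl o ℓ o = [] := dif_pos rfl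

theorem factorIncl_of_ne {v : γ} (h : v ≠ o) : factorIncl o ℓ v = [ℓ ⟨v, h⟩] := dif_neg h

theorem length_factorIncl_le (v : γ) : (factorIncl o ℓ v).length ≤ 1 := by
  unfold factorIncl
  split <;> simp

theorem factorIncl_injective (hℓ : Function.Injective ℓ) : Function.Injective (factorIncl o ℓ) := by
  intro a b h
  by_cases ha : a = o <;> by_cases hb : b = o
  · rw [ha, hb]
  · simp [factorIncl_self, factorIncl_of_ne hb, ha] at h
  · simp [factorIncl_self, factorIncl_of_ne ha, hb] at h
  · rw [factorIncl_of_ne ha, factorIncl_of_ne hb, List.singleton_inj] at h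
    exact congrArg Subtype.val (hℓ h)

theorem wtype_of_val_eq_append_factorIncl (hside : ∀ v, (ℓ v).side = i) {y : Word α β o₁ o₂}
    {w : List (Letter α β o₁ o₂)} {v : γ} (hv : v ≠ o) (hy : y.val = w ++ factorIncl o ℓ v) :
    wtype y = i := by
  rw [factorIncl_of_ne hv] at hy
  rw [wtype_of_val_eq_append_singleton hy, hside]

theorem alternating_append_factorIncl (hside : ∀ v, (ℓ v).side = i) {w : Word α β o₁ o₂}
    (hw : wtype w ≠ i) (v : γ) : Alternating (w.val ++ factorIncl o ℓ v) := by
  by_cases hv : v = o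
  · simpa [hv, factorIncl_self] using w.2
  rw [factorIncl_of_ne hv]
  refine List.isChain_append.2 ⟨w.2, List.isChain_singleton _, fun a ha b hb => ?_⟩
  obtain rfl : b = ℓ ⟨v, hv⟩ := by simpa using hb.symm
  rw [hside]
  rintro rfl
  exact hw (by simp [wtype, Option.mem_def.1 ha])

theorem append_factorIncl_inj (hℓ : Function.Injective ℓ) (hside : ∀ v, (ℓ v).side = i)
    {w w' : Word α β o₁ o₂} (hw : wtype w ≠ i) (hw' : wtype w' ≠ i) {a a' : γ}
    (h : w.val ++ factorIncl o ℓ a = w'.val ++ factorIncl o ℓ a') : w = w' ∧ a = a' := by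
  by_cases ha : a = o <;> by_cases ha' : a' = o
  · subst ha ha'
    simpa [factorIncl_self, Subtype.ext_iff] using h
  · rw [ha, factorIncl_self, List.append_nil] at h
    exact absurd (wtype_of_val_eq_append_factorIncl hside ha' h) hw
  · rw [ha', factorIncl_self, List.append_nil] at h
    exact absurd (wtype_of_val_eq_append_factorIncl hside ha h.symm) hw'
  · obtain ⟨hww, haa⟩ := List.append_inj' h (by simp [factorIncl_of_ne ha, factorIncl_of_ne ha'])
    exact ⟨Subtype.ext hww, factorIncl_injective hℓ haa⟩

theorem liftKernel_apply (hℓ : Function.Injective ℓ) (hside : ∀ v, (ℓ v).side = i)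
    {w y v : Word α β o₁ o₂} {s t : γ} (hw : wtype w ≠ i)
    (hy : y.val = w.val ++ factorIncl o ℓ s) (hv : v.val = w.val ++ factorIncl o ℓ t) :
    liftKernel i (factorIncl o ℓ) p y v = p s t := by
  have hunique : ∀ w' a b, wtype w' ≠ i ∧ y.val = w'.val ++ factorIncl o ℓ a ∧
      v.val = w'.val ++ factorIncl o ℓ b ↔ w' = w ∧ a = s ∧ b = t := by
    refine fun w' a b => ⟨fun ⟨hw', hy', hv'⟩ => ?_, ?_⟩
    · obtain ⟨rfl, rfl⟩ := append_factorIncl_inj hℓ hside hw' hw (hy'.symm.trans hy)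
      exact ⟨rfl, rfl, factorIncl_injective hℓ (List.append_cancel_left (hv'.symm.trans hv))⟩
    · rintro ⟨rfl, rfl, rfl⟩
      exact ⟨hw, hy, hv⟩
  unfold liftKernel
  rw [tsum_eq_single w fun w' hw' => by simp [hunique, hw'],
    tsum_eq_single s fun a ha => by simp [hunique, ha],
    tsum_eq_single t fun b hb => by simp [hunique, hb], if_pos ((hunique w s t).2 ⟨rfl, rfl, rfl⟩)]

theorem hasSum_liftKernel (hℓ : Function.Injective ℓ) (hside : ∀ v, (ℓ v).side = i)
    (hp : ∀ s, HasSum (p s) 1) {w y : Word α β o₁ o₂} {s : γ} (hw : wtype w ≠ i)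
    (hy : y.val = w.val ++ factorIncl o ℓ s) :
    HasSum (liftKernel i (factorIncl o ℓ) p y) 1 := by
  let Φ : γ → Word α β o₁ o₂ := fun t =>
    ⟨w.val ++ factorIncl o ℓ t, alternating_append_factorIncl hside hw t⟩
  have hΦ : Function.Injective Φ := fun a b h =>
    factorIncl_injective hℓ (List.append_cancel_left (congrArg Subtype.val h))
  refine (hΦ.hasSum_iff fun v hv => ?_).1 ?_
  · by_contra hne
    obtain ⟨w', a, b, hw', hy', hv', -⟩ := exists_of_liftKernel_ne_zero hne
    obtain ⟨rfl, -⟩ := append_factorIncl_inj hℓ hside hw' hw (hy'.symm.trans hy)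
    exact hv ⟨b, Subtype.ext hv'.symm⟩
  · convert hp s using 1
    exact funext fun t => liftKernel_apply hℓ hside hw hy (v := Φ t) rfl

/-- A move of the lifted kernel from a word of type `i` replaces its last letter by a different
letter or deletes it, so it leaves the cone. -/
theorem liftKernel_eq_zero_of_mem_cone (hℓ : Function.Injective ℓ) (hside : ∀ v, (ℓ v).side = i)
    (hp : ∀ a, p a a = 0) {y v : Word α β o₁ o₂} (hy : wtype y = i) (hv : v ∈ cone y) :
    liftKernel i (factorIncl o ℓ) p y v = 0 := by
  by_contra hne
  obtain ⟨w, a, b, hw, hy', hv', hab⟩ := exists_of_liftKernel_ne_zero hne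
  have ha : a ≠ o := by
    rintro rfl
    rw [factorIncl_self, List.append_nil] at hy'
    exact hw (by rw [← hy, show y = w from Subtype.ext hy'])
  have hpre : factorIncl o ℓ a <+: factorIncl o ℓ b := by
    rw [← List.prefix_append_right_inj w.val, ← hy', ← hv']
    exact hv
  have hlen : (factorIncl o ℓ a).length = 1 := by simp [factorIncl_of_ne ha]
  have := length_factorIncl_le (ℓ := ℓ) b
  obtain rfl := factorIncl_injective hℓ (hpre.eq_of_length (by have := hpre.length_le; omega))
  exact hab (hp a)

/-- From a word of type `≠ i`, the lifted kernel only appends a letter. -/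
theorem liftKernel_eq_zero_of_notMem_cone (hside : ∀ v, (ℓ v).side = i) {y v : Word α β o₁ o₂}
    (hy : wtype y ≠ i) (hv : v ∉ cone y) : liftKernel i (factorIncl o ℓ) p y v = 0 := by
  by_contra hne
  obtain ⟨w, a, b, -, hy', hv', -⟩ := exists_of_liftKernel_ne_zero hne
  by_cases ha : a = o
  · rw [ha, factorIncl_self, List.append_nil] at hy'
    exact hv (show y.val <+: v.val by rw [hy', hv']; exact List.prefix_append _ _)
  · exact hy (wtype_of_val_eq_append_factorIncl hside ha hy')

theorem adj_of_liftKernel_ne_zero (hℓ : Function.Injective ℓ) (hp : ∀ a, p a a = 0)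
    {x y : Word α β o₁ o₂} (h : liftKernel i (factorIncl o ℓ) p x y ≠ 0) : Adj x y := by
  obtain ⟨w, a, b, -, hx, hy, hab⟩ := exists_of_liftKernel_ne_zero h
  refine ⟨fun hxy => ?_, w.val, hx ▸ List.prefix_append _ _, hy ▸ List.prefix_append _ _, ?_, ?_⟩
  · rw [hxy, hy] at hx
    rw [factorIncl_injective hℓ (List.append_cancel_left hx)] at hab
    exact hab (hp a)
  · simpa [hx] using length_factorIncl_le a
  · simpa [hy] using length_factorIncl_le b

end FactorIncl

theorem pbar1_eq_liftKernel [DecidableEq α] (p₁ : α → α → ℝ) :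
    pbar1 o₁ o₂ p₁ = liftKernel 1 (factorIncl o₁ Sum.inl) p₁ := by
  unfold pbar1 liftKernel
  congr!

theorem pbar2_eq_liftKernel [DecidableEq β] (p₂ : β → β → ℝ) :
    pbar2 o₁ o₂ p₂ = liftKernel 2 (factorIncl o₂ Sum.inr) p₂ := by
  unfold pbar2 liftKernel
  congr!

theorem exists_val_eq_append_factorIncl_inl [DecidableEq α] {y : Word α β o₁ o₂}
    (hy : wtype y = 1) :
    ∃ (w : Word α β o₁ o₂) (s : α), wtype w ≠ 1 ∧ y.val = w.val ++ factorIncl o₁ Sum.inl s := by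
  obtain ⟨l, hl⟩ : ∃ l, y.val.getLast? = some l := by
    cases h : y.val.getLast? with
    | none => simp [wtype, h] at hy
    | some l => exact ⟨l, rfl⟩
  obtain ⟨a, rfl⟩ : ∃ a, l = Sum.inl a := by
    rcases l with a | b
    · exact ⟨a, rfl⟩
    · simp [wtype, hl, Letter.side] at hy
  have hsplit := List.dropLast_append_getLast? (Sum.inl a) hl
  have hchain : Alternating (y.val.dropLast ++ [Sum.inl a]) := by rw [hsplit]; exact y.2
  refine ⟨⟨y.val.dropLast, y.2.dropLast⟩, a.val, fun hw => ?_, ?_⟩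
  · obtain ⟨b, hb⟩ : ∃ b, y.val.dropLast.getLast? = some b := by
      cases h : y.val.dropLast.getLast? with
      | none => simp [wtype, h] at hw
      | some b => exact ⟨b, rfl⟩
    have hb1 : b.side = 1 := by simpa [wtype, hb] using hw
    exact (List.isChain_append.1 hchain).2.2 b hb (Sum.inl a) rfl hb1
  · rw [factorIncl_of_ne a.2]
    exact hsplit.symm

theorem measurableSet_eval_mem (n : ℕ) (T : Set (Word α β o₁ o₂)) :
    MeasurableSet {ω : ℕ → Word α β o₁ o₂ | ω n ∈ T} :=
  measurable_pi_apply n MeasurableSpace.measurableSet_top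

/-- The event `S_G = n`. -/
def firstHitAt (G : Set (Word α β o₁ o₂)) (n : ℕ) : Set (ℕ → Word α β o₁ o₂) :=
  {ω | ω n ∈ G ∧ ∀ m, 1 ≤ m → m < n → ω m ∉ G}

theorem measurableSet_firstHitAt (G : Set (Word α β o₁ o₂)) (n : ℕ) :
    MeasurableSet (firstHitAt G n) := by
  unfold firstHitAt
  measurability

theorem measurableSet_neverHit (G : Set (Word α β o₁ o₂)) : MeasurableSet (neverHit G) := by
  unfold neverHit
  measurability

theorem measure_eq_tsum_firstHitAt_add_neverHit (μ : Measure (ℕ → Word α β o₁ o₂))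
    (G : Set (Word α β o₁ o₂)) {E : Set (ℕ → Word α β o₁ o₂)} (hE : MeasurableSet E) :
    μ E = ∑' n, μ (E ∩ firstHitAt G (n + 1)) + μ (E ∩ neverHit G) := by
  have hcover : E = (⋃ n, E ∩ firstHitAt G (n + 1)) ∪ (E ∩ neverHit G) := by
    ext ω
    simp only [Set.mem_union, Set.mem_iUnion, Set.mem_inter_iff]
    refine ⟨fun hω => ?_, by rintro (⟨n, hω, -⟩ | ⟨hω, -⟩) <;> exact hω⟩
    by_cases hhit : ∃ n, 1 ≤ n ∧ ω n ∈ G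
    · classical
      obtain ⟨hn1, hnG⟩ := Nat.find_spec hhit
      obtain ⟨n, hn⟩ : ∃ n, Nat.find hhit = n + 1 := Nat.exists_eq_add_one.2 hn1
      exact Or.inl ⟨n, hω, hn ▸ hnG, fun m hm1 hm2 hmG =>
        Nat.find_min hhit (hn ▸ hm2) ⟨hm1, hmG⟩⟩
    · simp only [not_exists, not_and] at hhit
      exact Or.inr ⟨hω, hhit⟩
  have hdisj : Pairwise (Function.onFun Disjoint fun n => E ∩ firstHitAt G (n + 1)) := by
    intro i j hij
    refine Set.disjoint_left.2 fun ω ⟨_, hiG, hi⟩ ⟨_, hjG, hj⟩ => ?_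
    rcases lt_or_gt_of_ne hij with h | h
    exacts [hj (i + 1) (by omega) (by omega) hiG, hi (j + 1) (by omega) (by omega) hjG]
  have hdisj' : Disjoint (⋃ n, E ∩ firstHitAt G (n + 1)) (E ∩ neverHit G) := by
    refine Set.disjoint_left.2 fun ω hω ⟨_, hnever⟩ => ?_
    obtain ⟨n, -, hnG, -⟩ := Set.mem_iUnion.1 hω
    exact hnever (n + 1) (by omega) hnG
  conv_lhs => rw [hcover]
  rw [measure_union hdisj' (hE.inter (measurableSet_neverHit G)),
    measure_iUnion hdisj fun n => hE.inter (measurableSet_firstHitAt G (n + 1))]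

theorem mem_of_forall_lt_notMem {X : Type*} {D G : Set X} {ω : ℕ → X} (h1 : ω 1 ∈ D)
    (hstep : ∀ k, 1 ≤ k → ω k ∈ D → ω k ∉ G → ω (k + 1) ∈ D) {m : ℕ} (hm : 1 ≤ m)
    (hG : ∀ k, 1 ≤ k → k < m → ω k ∉ G) : ω m ∈ D := by
  induction m, hm using Nat.le_induction with
  | base => exact h1
  | succ k hk ih =>
    exact hstep k hk (ih fun j hj1 hj2 => hG j hj1 (by omega)) (hG k hk (by omega))

namespace Setup

variable [DecidableEq α] [DecidableEq β] (S : Setup α β o₁ o₂)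

theorem P_nonneg (x y : Word α β o₁ o₂) : 0 ≤ S.P x y := by
  rw [Setup.P, pbar1_eq_liftKernel, pbar2_eq_liftKernel]
  exact add_nonneg (mul_nonneg S.a_mem.1.le (liftKernel_nonneg S.p₁_nonneg x y))
    (mul_nonneg (sub_nonneg.2 S.a_mem.2.le) (liftKernel_nonneg S.p₂_nonneg x y))

theorem adj_of_P_ne_zero {x y : Word α β o₁ o₂} (h : S.P x y ≠ 0) : Adj x y := by
  rw [Setup.P, pbar1_eq_liftKernel, pbar2_eq_liftKernel] at h
  by_cases h₁ : liftKernel 1 (factorIncl o₁ Sum.inl) S.p₁ x y = 0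
  · rw [h₁, mul_zero, zero_add] at h
    exact adj_of_liftKernel_ne_zero Sum.inr_injective S.p₂_noloop (right_ne_zero_of_mul h)
  · exact adj_of_liftKernel_ne_zero Sum.inl_injective S.p₁_noloop h₁

theorem hasSum_pbar1 {y : Word α β o₁ o₂} (hy : wtype y = 1) :
    HasSum (pbar1 o₁ o₂ S.p₁ y) 1 := by
  obtain ⟨w, s, hw, hws⟩ := exists_val_eq_append_factorIncl_inl hy
  rw [pbar1_eq_liftKernel]
  exact hasSum_liftKernel Sum.inl_injective (fun _ => rfl) S.p₁_rowsum hw hws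

theorem hasSum_pbar2 {y : Word α β o₁ o₂} (hy : wtype y ≠ 2) :
    HasSum (pbar2 o₁ o₂ S.p₂ y) 1 := by
  rw [pbar2_eq_liftKernel]
  exact hasSum_liftKernel Sum.inr_injective (fun _ => rfl) S.p₂_rowsum hy (s := o₂)
    (by rw [factorIncl_self, List.append_nil])

theorem pbar1_eq_zero_of_mem_cone {y v : Word α β o₁ o₂} (hy : wtype y = 1) (hv : v ∈ cone y) :
    pbar1 o₁ o₂ S.p₁ y v = 0 := by
  rw [pbar1_eq_liftKernel]
  exact liftKernel_eq_zero_of_mem_cone Sum.inl_injective (fun _ => rfl) S.p₁_noloop hy hv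

theorem pbar2_eq_zero_of_notMem_cone {y v : Word α β o₁ o₂} (hy : wtype y ≠ 2)
    (hv : v ∉ cone y) : pbar2 o₁ o₂ S.p₂ y v = 0 := by
  rw [pbar2_eq_liftKernel]
  exact liftKernel_eq_zero_of_notMem_cone (i := 2) (fun _ => rfl) hy hv

theorem hasSum_P_cone {y : Word α β o₁ o₂} (hy : wtype y = 1) :
    HasSum (fun v : cone y => S.P y v) (1 - S.a) := by
  have hy₂ : wtype y ≠ 2 := by omega
  have hP : (fun v : cone y => S.P y v) =
      (fun v => (1 - S.a) * pbar2 o₁ o₂ S.p₂ y v) ∘ Subtype.val :=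
    funext fun v => by simp [Setup.P, S.pbar1_eq_zero_of_mem_cone hy v.2]
  rw [hP, hasSum_subtype_iff_of_support_subset fun v hv =>
    by_contra fun hvy => hv (by simp [S.pbar2_eq_zero_of_notMem_cone hy₂ hvy])]
  simpa using (S.hasSum_pbar2 hy₂).mul_left (1 - S.a)

theorem hasSum_P_compl_cone {y : Word α β o₁ o₂} (hy : wtype y = 1) :
    HasSum (fun v : ↥(cone y)ᶜ => S.P y v) S.a := by
  have hP : (fun v : ↥(cone y)ᶜ => S.P y v) = (fun v => S.a * pbar1 o₁ o₂ S.p₁ y v) ∘ Subtype.val :=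
    funext fun v => by simp [Setup.P, S.pbar2_eq_zero_of_notMem_cone (by omega) v.2]
  rw [hP, hasSum_subtype_iff_of_support_subset (s := (cone y)ᶜ) fun v hv hvy =>
    hv (by simp [S.pbar1_eq_zero_of_mem_cone hy hvy])]
  simpa using (S.hasSum_pbar1 hy).mul_left S.a

theorem ae_start (y : Word α β o₁ o₂) : ∀ᵐ ω ∂S.μ y, ω 0 = y := by
  have := S.μ_prob y
  have hstart : MeasurableSet {ω : ℕ → Word α β o₁ o₂ | ω 0 = y} := measurableSet_eval_mem 0 {y}
  exact (ae_iff_measure_eq hstart.nullMeasurableSet).2 (by rw [S.μ_start, measure_univ])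

theorem measure_step_eq (y v : Word α β o₁ o₂) :
    S.μ y {ω | ω 1 = v} = ENNReal.ofReal (S.P y v) := by
  let w : ℕ → Word α β o₁ o₂ := fun i => if i = 0 then y else v
  calc S.μ y {ω | ω 1 = v} = S.μ y {ω | ∀ i ≤ 1, ω i = w i} := by
        refine measure_congr (Filter.eventuallyEq_set.2 ?_)
        filter_upwards [S.ae_start y] with ω h0
        simp [w, Nat.le_one_iff_eq_zero_or_eq_one, or_imp, forall_and, h0]
    _ = ENNReal.ofReal (S.P y v) := by
        rw [S.μ_cyl]
        simp [w, Setup.P]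

theorem measure_step_mem {y : Word α β o₁ o₂} {T : Set (Word α β o₁ o₂)} {c : ℝ}
    (hT : HasSum (fun v : T => S.P y v) c) : S.μ y {ω | ω 1 ∈ T} = ENNReal.ofReal c := by
  have := S.countable₁
  have := S.countable₂
  rw [← hT.tsum_eq, ENNReal.ofReal_tsum_of_nonneg (f := fun v : T => S.P y v)
    (fun v => S.P_nonneg y v) hT.summable]
  exact (tsum_measure_preimage_singleton (Set.to_countable T)
    (f := fun ω : ℕ → Word α β o₁ o₂ => ω 1) fun v _ => measurableSet_eval_mem 1 {v}).symm.trans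
    (tsum_congr fun v => S.measure_step_eq y v)

theorem ae_P_ne_zero (y : Word α β o₁ o₂) (m : ℕ) :
    ∀ᵐ ω ∂S.μ y, S.P (ω m) (ω (m + 1)) ≠ 0 := by
  have := S.countable₁
  have := S.countable₂
  let extend : (Fin (m + 2) → Word α β o₁ o₂) → ℕ → Word α β o₁ o₂ :=
    fun w i => if h : i < m + 2 then w ⟨i, h⟩ else y
  have hcyl : ∀ w, S.P (extend w m) (extend w (m + 1)) = 0 →
      S.μ y {ω | ∀ i ≤ m + 1, ω i = extend w i} = 0 := by
    intro w hw
    rw [S.μ_cyl]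
    split_ifs
    · rw [Finset.prod_eq_zero (Finset.self_mem_range_succ m) hw, ENNReal.ofReal_zero]
    · exact ENNReal.ofReal_zero
  rw [ae_iff]
  refine measure_mono_null (fun ω hω => ?_) (measure_iUnion_null fun w =>
    measure_iUnion_null fun hw => hcyl w hw)
  simp only [Set.mem_iUnion]
  refine ⟨fun i => ω i, ?_, fun i hi => ?_⟩
  · simpa [extend] using hω
  · simp [extend, show i < m + 2 by omega]

theorem ae_adj (y : Word α β o₁ o₂) : ∀ᵐ ω ∂S.μ y, ∀ m, Adj (ω m) (ω (m + 1)) :=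
  ae_all_iff.2 fun m => (S.ae_P_ne_zero y m).mono fun _ => S.adj_of_P_ne_zero

theorem firstPassage_cone {y : Word α β o₁ o₂} {G : Set (Word α β o₁ o₂)} (hy : wtype y = 1)
    (hyG : y ∈ G) :
    ENNReal.ofReal (1 - S.a) =
      ∑' n, S.μ y {ω | ω (n + 1) ∈ G ∧ (∀ m, 1 ≤ m → m < n + 1 → ω m ∉ G) ∧
        ∀ m ≤ n + 1, ω m ∈ cone y}
      + S.μ y (neverHit G ∩ {ω | ∀ n, 1 ≤ n → ω n ∈ cone y}) := by
  have htrap : ∀ᵐ ω ∂S.μ y, ω 0 = y ∧ (ω 1 ∈ cone y →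
      ∀ m, 1 ≤ m → (∀ k, 1 ≤ k → k < m → ω k ∉ G) → ω m ∈ cone y) := by
    filter_upwards [S.ae_start y, S.ae_adj y] with ω h0 hadj
    refine ⟨h0, fun h1 m => mem_of_forall_lt_notMem h1 fun k _ hk hkG => ?_⟩
    by_contra hk1
    exact hkG ((hadj k).eq_of_mem_cone_of_notMem_cone hk hk1 ▸ hyG)
  rw [← S.measure_step_mem (S.hasSum_P_cone hy),
    measure_eq_tsum_firstHitAt_add_neverHit _ G (measurableSet_eval_mem 1 _)]
  congr 1
  · refine tsum_congr fun n => measure_congr (Filter.eventuallyEq_set.2 ?_)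
    filter_upwards [htrap] with ω ⟨h0, htr⟩
    constructor
    · rintro ⟨h1, hG, hbefore⟩
      refine ⟨hG, hbefore, fun m hm => ?_⟩
      rcases Nat.eq_zero_or_pos m with rfl | hm0
      · exact h0 ▸ mem_cone_self y
      · exact htr h1 m hm0 fun k hk1 hk2 => hbefore k hk1 (by omega)
    · rintro ⟨hG, hbefore, hcone⟩
      exact ⟨hcone 1 (by omega), hG, hbefore⟩
  · refine measure_congr (Filter.eventuallyEq_set.2 ?_)
    filter_upwards [htrap] with ω hω
    have htr := hω.2
    exact ⟨fun ⟨h1, hnever⟩ => ⟨hnever, fun m hm => htr h1 m hm fun k hk _ => hnever k hk⟩,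
      fun ⟨hnever, hcone⟩ => ⟨hcone 1 le_rfl, hnever⟩⟩

theorem firstPassage_compl_cone {y : Word α β o₁ o₂} {G : Set (Word α β o₁ o₂)}
    (hy : wtype y = 1) (hyG : y ∈ G) (hGy : ∀ u ∈ G, u ∈ cone y → u = y) :
    ENNReal.ofReal S.a =
      ∑' n, S.μ y {ω | ω (n + 1) ∈ G ∧ (∀ m, 1 ≤ m → m < n + 1 → ω m ∉ G) ∧
        ∀ m, 1 ≤ m → m < n + 1 → ω m ∉ cone y}
      + S.μ y (neverHit G ∩ {ω | ∀ n, 1 ≤ n → ω n ∉ cone y}) := by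
  have htrap : ∀ᵐ ω ∂S.μ y, ω 1 ≠ y ∧ (ω 1 ∉ cone y →
      ∀ m, 1 ≤ m → (∀ k, 1 ≤ k → k ≤ m → ω k ∉ G) → ω m ∉ cone y) := by
    filter_upwards [S.ae_start y, S.ae_adj y] with ω h0 hadj
    refine ⟨fun h1 => (hadj 0).1 (h0.trans h1.symm), fun h1 m hm hG => ?_⟩
    -- the walk can only enter the cone at its apex `y ∈ G`
    have hstay : ω m ∈ (cone y)ᶜ ∪ G := by
      refine mem_of_forall_lt_notMem (D := (cone y)ᶜ ∪ G) (G := G) (Or.inl h1)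
        (fun k _ hk hkG => ?_) hm fun k hk1 hk2 => hG k hk1 hk2.le
      by_contra hout
      simp only [Set.mem_union, Set.mem_compl_iff, not_or, not_not] at hout
      exact hout.2 ((hadj k).symm.eq_of_mem_cone_of_notMem_cone hout.1
        (hk.resolve_right hkG) ▸ hyG)
    exact hstay.resolve_right (hG m hm le_rfl)
  rw [← S.measure_step_mem (S.hasSum_P_compl_cone hy),
    measure_eq_tsum_firstHitAt_add_neverHit _ G (measurableSet_eval_mem 1 _)]
  congr 1
  · refine tsum_congr fun n => measure_congr (Filter.eventuallyEq_set.2 ?_)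
    filter_upwards [htrap] with ω ⟨h1y, htr⟩
    constructor
    · rintro ⟨h1, hG, hbefore⟩
      exact ⟨hG, hbefore, fun m hm1 hm2 =>
        htr h1 m hm1 fun k hk1 hk2 => hbefore k hk1 (by omega)⟩
    · rintro ⟨hG, hbefore, hout⟩
      refine ⟨fun h1 => ?_, hG, hbefore⟩
      rcases Nat.eq_zero_or_pos n with rfl | hn
      · exact h1y (hGy _ hG h1)
      · exact hout 1 le_rfl (by omega) h1
  · refine measure_congr (Filter.eventuallyEq_set.2 ?_)
    filter_upwards [htrap] with ω hω
    have htr := hω.2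
    exact ⟨fun ⟨h1, hnever⟩ => ⟨hnever, fun m hm => htr h1 m hm fun k hk _ => hnever k hk⟩,
      fun ⟨hnever, hout⟩ => ⟨hout 1 le_rfl, hnever⟩⟩

end Setup

/-- The shape in which `U0real … 1` and `U1real … 1` unfold. -/
theorem sub_tsum_toReal_eq_toReal {c : ℝ} (hc : 0 ≤ c) {f : ℕ → ℝ≥0∞} {b : ℝ≥0∞}
    (h : ENNReal.ofReal c = ∑' n, f (n + 1) + b) :
    c * 1 - ∑' n, (if 1 ≤ n then (f n).toReal else 0) * 1 ^ n = b.toReal := by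
  have hsum : ∑' n, f (n + 1) ≠ ⊤ := fun htop => by simp [htop] at h
  have hb : b ≠ ⊤ := fun htop => by simp [htop] at h
  have hshift : ∑' n, (if 1 ≤ n then (f n).toReal else 0) * 1 ^ n = ∑' n, (f (n + 1)).toReal := by
    rw [tsum_eq_zero_add' (by simpa using ENNReal.summable_toReal hsum)]
    simp
  rw [hshift, ← ENNReal.tsum_toReal_eq (ENNReal.ne_top_of_tsum_ne_top hsum),
    ← ENNReal.toReal_ofReal hc, h, ENNReal.toReal_add hsum hb]
  ring

theorem mem_cone_exitTime {ω : ℕ → Word α β o₁ o₂} {k : ℕ} (hk : exitTime ω k ≠ 0) {n : ℕ}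
    (hn : exitTime ω k ≤ n) : ω n ∈ cone (ω (exitTime ω k)) := by
  cases k with
  | zero => exact absurd rfl hk
  | succ k =>
    -- `sInf ∅ = 0`, so `hk` says that the infimum is attained
    have hne : {m | 0 < m ∧ wlen (ω m) = k + 1 ∧ ∀ n ≥ m, ω n ∈ cone (ω m)}.Nonempty := by
      by_contra hempty
      exact hk (by rw [exitTime, Set.not_nonempty_iff_eq_empty.1 hempty, Nat.sInf_empty])
    exact (Nat.sInf_mem hne).2.2 n hn

section Regeneration

variable {g : {u : α // u ≠ o₁}} {ω : ℕ → Word α β o₁ o₂} {x : Word α β o₁ o₂}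

theorem mem_Rnorm (hT : (ω (Tk g ω 1)).val = (ω (Tk g ω 0)).val ++ x.val) : x ∈ Rnorm g ω :=
  ⟨ω (Tk g ω 1), ⟨⟨Tk g ω 1, le_rfl, rfl⟩, ⟨x.val, hT.symm⟩, fun h => h.2 rfl⟩, hT⟩

theorem eq_of_mem_Rnorm_of_prefix (hT : (ω (Tk g ω 1)).val = (ω (Tk g ω 0)).val ++ x.val)
    {w : Word α β o₁ o₂} (hw : w ∈ Rnorm g ω) (hxw : x.val <+: w.val) : w = x := by
  obtain ⟨u, ⟨-, -, hu⟩, huw⟩ := hw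
  have hu1 : u = ω (Tk g ω 1) := by
    by_contra hne
    refine hu ⟨?_, hne⟩
    show (ω (Tk g ω 1)).val <+: u.val
    rw [huw, hT]
    exact (List.prefix_append_right_inj _).2 hxw
  exact Subtype.ext (List.append_cancel_left (huw.symm.trans (hu1 ▸ hT)))

theorem emptyWord_mem_Rnorm (h0 : ω 0 = emptyWord)
    (hT : (ω (Tk g ω 1)).val = (ω (Tk g ω 0)).val ++ x.val) (hx : x.val ≠ []) :
    emptyWord ∈ Rnorm g ω := by
  have hlen : (ω (Tk g ω 0)).val.length < (ω (Tk g ω 1)).val.length := by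
    rw [hT, List.length_append]
    have := List.length_pos_iff.2 hx
    omega
  have hT1 : Tk g ω 1 ≠ 0 := fun h => by simp [h, h0, emptyWord] at hlen
  have hle : Tk g ω 0 ≤ Tk g ω 1 := by
    by_contra! hlt
    have hcone : ω (Tk g ω 0) ∈ cone (ω (Tk g ω 1)) := mem_cone_exitTime hT1 hlt.le
    have := hcone.length_le
    omega
  refine ⟨ω (Tk g ω 0), ⟨⟨Tk g ω 0, hle, rfl⟩, mem_cone_self _, fun h => ?_⟩,
    (List.append_nil _).symm⟩
  have := h.1.length_le
  omega

end Regeneration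

variable [DecidableEq α] [DecidableEq β]

theorem Ubar_eq_escape_prob_general (S : Setup α β o₁ o₂)
    (g : {u : α // u ≠ o₁})
    (R : Set (Word α β o₁ o₂))
    (x : Word α β o₁ o₂) (hx : x ∈ V2g g)
    (hpos : 0 < S.μ emptyWord
      {ω | Rnorm g ω = R ∧ (ω (Tk g ω 1)).val = (ω (Tk g ω 0)).val ++ x.val}) :
    ((1 - S.a) * 1 - U0real S g (gSet g R) 1 =
      (S.μ (letterWord (Sum.inl g))
        (neverHit (gSet g R) ∩
          {ω | ∀ n, 1 ≤ n → ω n ∈ cone (letterWord (Sum.inl g))})).toReal) ∧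
    ∀ gx : Word α β o₁ o₂,
      gx.val = (letterWord (Sum.inl g) : Word α β o₁ o₂).val ++ x.val →
        S.a * 1 - U1real S gx (gSet g R) 1 =
          (S.μ gx (neverHit (gSet g R) ∩
            {ω | ∀ n, 1 ≤ n → ω n ∉ cone gx})).toReal := by
  obtain ⟨ω, ⟨rfl, hT⟩, hω0⟩ :=
    ((frequently_ae_mem_iff.2 hpos.ne').and_eventually (S.ae_start emptyWord)).exists
  have hxlast : x.val.getLast? = some (Sum.inl g) := hx.2.1
  have hxne : x.val ≠ [] := fun h => by simp [h] at hxlast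
  refine ⟨sub_tsum_toReal_eq_toReal (sub_nonneg.2 S.a_mem.2.le)
    (S.firstPassage_cone rfl ⟨emptyWord, emptyWord_mem_Rnorm hω0 hT hxne, rfl⟩), fun gx hgx => ?_⟩
  have hgx1 : wtype gx = 1 := by
    simp [wtype, hgx, List.getLast?_append_of_ne_nil _ hxne, hxlast, Letter.side]
  refine sub_tsum_toReal_eq_toReal S.a_mem.1.le
    (S.firstPassage_compl_cone hgx1 ⟨x, mem_Rnorm hT, hgx⟩ fun u ⟨w, hw, hu⟩ hgxu => ?_)
  have hxw : [Sum.inl g] ++ x.val <+: [Sum.inl g] ++ w.val := by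
    have hpre : gx.val <+: u.val := hgxu
    rw [hgx, hu] at hpre
    exact hpre
  obtain rfl := eq_of_mem_Rnorm_of_prefix hT hw ((List.prefix_append_right_inj _).1 hxw)
  exact Subtype.ext (hu.trans hgx.symm)

/-- **Lemma 5.9.** For every finite `R ∈ 𝒲` and `x ∈ V_{2,g}` with
`ℙ[R̃_norm = R, ι = x] > 0`:
(i)  `Ū₀(g, gR|1) = ℙ_g[S_{gR} = ∞, X_n ∈ C(g) ∀ n ≥ 1]`;
(ii) `Ū₁(gx, gR|1) = ℙ_{gx}[S_{gR} = ∞, X_n ∉ C(gx) ∀ n ≥ 1]`. -/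
theorem Ubar_eq_escape_prob (S : Setup α β o₁ o₂) (hρ : S.rho < 1)
    (g : {u : α // u ≠ o₁})
    (R : Set (Word α β o₁ o₂)) (hR : R.Finite)
    (x : Word α β o₁ o₂) (hx : x ∈ V2g g)
    (hpos : 0 < S.μ emptyWord
      {ω | Rnorm g ω = R ∧ (ω (Tk g ω 1)).val = (ω (Tk g ω 0)).val ++ x.val}) :
    ((1 - S.a) * 1 - U0real S g (gSet g R) 1 =
      (S.μ (letterWord (Sum.inl g))
        (neverHit (gSet g R) ∩
          {ω | ∀ n, 1 ≤ n → ω n ∈ cone (letterWord (Sum.inl g))})).toReal) ∧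
    ∀ gx : Word α β o₁ o₂,
      gx.val = (letterWord (Sum.inl g) : Word α β o₁ o₂).val ++ x.val →
        S.a * 1 - U1real S gx (gSet g R) 1 =
          (S.μ gx (neverHit (gSet g R) ∩
            {ω | ∀ n, 1 ≤ n → ω n ∉ cone gx})).toReal :=
  Ubar_eq_escape_prob_general S g R x hx hpos

end CapFP
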